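/- Let G be a finite nilpotent group of order p_1^{α_1} p_2^{α_2} with primes p_1 < p_2, whose Sylow p_1-subgroup P_1 is noncyclic and whose Sylow p_2-subgroup P_2 is cyclic. Let ⟨y⟩ be a maximal cyclic subgroup of G with Sylow decomposition y = y_1 y_2 (y_i ∈ P_i). If x ∈ ⟨y⟩ has both Sylow components nonidentity (i.e., both p_1 and p_2 divide o(x)), then deg(x) > deg(y_1) in the power graph P(G); in particular deg(y) > deg(y_1). -/

import Mathlib

/-- The power graph of a group: distinct `x` and `y` are adjacent iff one is a
positive power of the other. -/
def powerGraph (G : Type*) [Group G] : SimpleGraph G where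
  Adj x y := x ≠ y ∧ ((∃ k : ℕ, 0 < k ∧ x = y ^ k) ∨ (∃ k : ℕ, 0 < k ∧ y = x ^ k))
  symm := by
    constructor
    intro x y h
    exact ⟨h.1.symm, h.2.symm⟩
  loopless := by
    constructor
    intro x h
    exact h.1 rfl

noncomputable instance powerGraphDecidableAdj (G : Type*) [Group G] :
    DecidableRel (powerGraph G).Adj :=
  Classical.decRel _

/-- The vertex connectivity of a finite graph: the minimum number of vertices whose
deletion yields a disconnected graph or a graph with exactly one vertex. -/
noncomputable def vertexConnectivity {V : Type*} [Fintype V] (Γ : SimpleGraph V) : ℕ :=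
  sInf {n | ∃ S : Finset V, S.card = n ∧
    (¬ (SimpleGraph.induce ((↑S : Set V)ᶜ) Γ).Preconnected ∨ ((↑S : Set V)ᶜ).ncard = 1)}

/-- A subgroup is a maximal cyclic subgroup if it is cyclic and not properly contained
in any cyclic subgroup. -/
def IsMaximalCyclic {G : Type*} [Group G] (M : Subgroup G) : Prop :=
  IsCyclic ↥M ∧ ∀ N : Subgroup G, IsCyclic ↥N → M ≤ N → M = N

/-- `K` is a maximal cyclic subgroup of the subgroup `H`. -/
def IsMaximalCyclicIn {G : Type*} [Group G] (H K : Subgroup G) : Prop :=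
  IsCyclic ↥K ∧ K ≤ H ∧ ∀ N : Subgroup G, IsCyclic ↥N → N ≤ H → K ≤ N → K = N

/-- A generalized quaternion group: a dicyclic group `Q_{4n}` with `n ≥ 2` a power of 2. -/
def IsGeneralizedQuaternion (G : Type*) [Group G] : Prop :=
  ∃ n : ℕ, 2 ≤ n ∧ (∃ k : ℕ, n = 2 ^ k) ∧ Nonempty (G ≃* QuaternionGroup n)

/-! Identify `G` with `P₁ × P₂` and write `N[v] = {z | z ∈ ⟨v⟩ ∨ v ∈ ⟨z⟩}`, so that
`deg v + 1 = |N[v]|`. Maximality of `⟨y⟩` forces every `a ∈ P₁` with `y₁ ∈ ⟨a⟩` to generate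
`⟨y₁⟩`, hence `N[y₁] ⊆ A × P₂ ∪ (⟨y₁⟩ \ A) × 1` for a set `A` of at most `φ(o(y₁))` generators.
Let `x = x₁ x₂` with `o(x₁) = p₁ ^ i` and `o(x₂) = p₂ ^ j` both nontrivial. Then `N[x]` contains
`B × C`, where `B` (resp. `C`) consists of the elements having `x₁` (resp. `x₂`) among their
powers; `B` misses at most `p₁ ^ (i - 1)` elements of the cyclic `p₁`-group `⟨y₁⟩`, and `C` at
most `p₂ ^ (j - 1)` elements of the cyclic group `P₂`. Disjointly from `B × C`, `N[x]` also
contains the non-generators of `⟨x₁⟩` times `⟨x₂⟩`. Comparing the two counts leaves an integer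
inequality that holds because `p₁ < p₂`. -/

open Subgroup

section PowerGraph

variable {G : Type*} [Group G]

def powerClosedNbhd (v : G) : Set G := {z | z ∈ zpowers v ∨ v ∈ zpowers z}

theorem powerGraph_adj_iff [Finite G] {v z : G} :
    (powerGraph G).Adj v z ↔ v ≠ z ∧ (v ∈ zpowers z ∨ z ∈ zpowers v) := by
  have key (a b : G) : (∃ k : ℕ, 0 < k ∧ a = b ^ k) ↔ a ∈ zpowers b := by
    rw [← mem_powers_iff_mem_zpowers, Submonoid.mem_powers_iff]
    constructor
    · rintro ⟨k, -, rfl⟩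
      exact ⟨k, rfl⟩
    · rintro ⟨k, rfl⟩
      refine ⟨k + orderOf b, by have := orderOf_pos b; omega, ?_⟩
      rw [pow_add, pow_orderOf_eq_one, mul_one]
  exact and_congr_right' (or_congr (key v z) (key z v))

theorem powerGraph_degree_add_one [Fintype G] (v : G) :
    (powerGraph G).degree v + 1 = (powerClosedNbhd v).ncard := by
  have hnbhd : powerClosedNbhd v = insert v ((powerGraph G).neighborSet v) := by
    ext z
    by_cases hz : z = v
    · simp [hz, powerClosedNbhd, mem_zpowers]
    · simp [hz, powerClosedNbhd, powerGraph_adj_iff, Ne.symm hz, or_comm]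
  rw [hnbhd, Set.ncard_insert_of_notMem (by simp), Set.ncard_eq_toFinset_card',
    Set.toFinset_card, SimpleGraph.card_neighborSet_eq_degree]

def MulEquiv.powerGraphIso {H : Type*} [Group H] (e : G ≃* H) :
    powerGraph G ≃g powerGraph H where
  toEquiv := e.toEquiv
  map_rel_iff' := by
    simp [powerGraph, ← map_pow, e.injective.eq_iff]

theorem powerGraph_degree_mulEquiv {H : Type*} [Group H] [Fintype G] [Fintype H] (e : G ≃* H)
    (v : G) : (powerGraph H).degree (e v) = (powerGraph G).degree v :=
  e.powerGraphIso.degree_eq v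

end PowerGraph

theorem MulEquiv.apply_mem_zpowers_apply_iff {G H : Type*} [Group G] [Group H] (e : G ≃* H)
    {u v : G} : e u ∈ zpowers (e v) ↔ u ∈ zpowers v := by
  simp only [mem_zpowers_iff, ← map_zpow, e.injective.eq_iff]

theorem IsMaximalCyclic.mem_zpowers_of_mem_zpowers {G : Type*} [Group G] {y w : G}
    (h : IsMaximalCyclic (zpowers y)) (hw : y ∈ zpowers w) : w ∈ zpowers y := by
  rw [h.2 _ (isCyclic_zpowers w) (zpowers_le.2 hw)]
  exact mem_zpowers w

theorem ncard_coe_zpowers {G : Type*} [Group G] (c : G) :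
    (zpowers c : Set G).ncard = orderOf c := by
  rw [← Nat.card_coe_set_eq, SetLike.coe_sort_coe, Nat.card_zpowers]

section PGroup

variable {M : Type*} [Group M] {p q : ℕ} [Fact p.Prime] [Fact q.Prime]

theorem IsPGroup.exists_orderOf_eq_pow_succ (hM : IsPGroup p M) {g : M} (hg : g ≠ 1) :
    ∃ k, orderOf g = p ^ (k + 1) := by
  obtain ⟨_ | k, hk⟩ := IsPGroup.iff_orderOf.1 hM g
  · exact absurd (orderOf_eq_one_iff.1 hk) hg
  · exact ⟨k, hk⟩

variable [Finite M]

theorem IsPGroup.not_dvd_natCard_of_ne (hM : IsPGroup q M) (hpq : p ≠ q) :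
    ¬ p ∣ Nat.card M := by
  obtain ⟨n, hn⟩ := IsPGroup.iff_card.1 hM
  rw [hn]
  exact fun h => hpq ((Nat.prime_dvd_prime_iff_eq Fact.out Fact.out).1
    ((Fact.out : p.Prime).dvd_of_dvd_pow h))

theorem IsPGroup.coprime_natCard_of_ne {N : Type*} [Group N] [Finite N] (hM : IsPGroup p M)
    (hN : IsPGroup q N) (hpq : p ≠ q) : (Nat.card M).Coprime (Nat.card N) := by
  obtain ⟨n, hn⟩ := IsPGroup.iff_card.1 hM
  obtain ⟨m, hm⟩ := IsPGroup.iff_card.1 hN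
  rw [hn, hm]
  exact Nat.coprime_pow_primes _ _ Fact.out Fact.out hpq

end PGroup

section Counting

variable {M : Type*} [Group M] [Finite M]

theorem IsCyclic.mem_zpowers_of_orderOf_dvd [IsCyclic M] {x b : M}
    (h : orderOf x ∣ orderOf b) : x ∈ zpowers b := by
  classical
  have := Fintype.ofFinite M
  have hsub : (zpowers b : Set M) ⊆ {t | t ^ orderOf b = 1} := by
    rintro _ ⟨k, rfl⟩
    change (b ^ k) ^ orderOf b = 1
    rw [← zpow_natCast, ← zpow_mul, mul_comm, zpow_mul, zpow_natCast, pow_orderOf_eq_one,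
      one_zpow]
  have hcard : {t : M | t ^ orderOf b = 1}.ncard ≤ orderOf b := by
    rw [Set.ncard_eq_toFinset_card', Set.toFinset_ofPred]
    exact IsCyclic.card_pow_eq_one_le (orderOf_pos b)
  have heq := Set.eq_of_subset_of_ncard_le hsub (by rwa [ncard_coe_zpowers])
  rw [← SetLike.mem_coe, heq]
  exact orderOf_dvd_iff_pow_eq_one.1 h

theorem pow_le_ncard_zpowers_diff {p k : ℕ} (hp : p.Prime) {c : M}
    (hc : orderOf c = p ^ (k + 1)) :
    p ^ k ≤ ((zpowers c : Set M) \ {a | c ∈ zpowers a}).ncard := by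
  have hcp : orderOf (c ^ p) = p ^ k := by
    rw [orderOf_pow_of_dvd hp.ne_zero (hc ▸ dvd_pow_self p k.succ_ne_zero), hc, pow_succ,
      Nat.mul_div_cancel _ hp.pos]
  have hsub : (zpowers (c ^ p) : Set M) ⊆ (zpowers c : Set M) \ {a | c ∈ zpowers a} := by
    intro a ha
    refine ⟨zpowers_le.2 (pow_mem (mem_zpowers c) p) ha, fun hca => ?_⟩
    have := orderOf_dvd_of_mem_zpowers (zpowers_le.2 ha hca)
    rw [hc, hcp, Nat.pow_dvd_pow_iff_le_right hp.one_lt] at this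
    omega
  calc p ^ k = (zpowers (c ^ p) : Set M).ncard := by rw [ncard_coe_zpowers, hcp]
    _ ≤ _ := Set.ncard_le_ncard hsub

variable {p : ℕ} [Fact p.Prime]

theorem IsCyclic.natCard_le_ncard_add [IsCyclic M] (hM : IsPGroup p M) {j : ℕ} {x : M}
    (hx : orderOf x = p ^ (j + 1)) : Nat.card M ≤ {b | x ∈ zpowers b}.ncard + p ^ j := by
  classical
  have := Fintype.ofFinite M
  have hsub : {b | x ∈ zpowers b}ᶜ ⊆ {b : M | b ^ p ^ j = 1} := by
    intro b hb
    obtain ⟨l, hl⟩ := IsPGroup.iff_orderOf.1 hM b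
    have hlj : ¬ p ^ (j + 1) ∣ p ^ l :=
      fun h => hb (mem_zpowers_of_orderOf_dvd (hx ▸ hl ▸ h))
    rw [Nat.pow_dvd_pow_iff_le_right (Fact.out : p.Prime).one_lt] at hlj
    exact orderOf_dvd_iff_pow_eq_one.1 (hl ▸ Nat.pow_dvd_pow p (by omega))
  have hcard : {b : M | b ^ p ^ j = 1}.ncard ≤ p ^ j := by
    rw [Set.ncard_eq_toFinset_card', Set.toFinset_ofPred]
    exact IsCyclic.card_pow_eq_one_le (pow_pos (Fact.out : p.Prime).pos j)
  rw [← Set.ncard_add_ncard_compl {b | x ∈ zpowers b}]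
  exact Nat.add_le_add_left ((Set.ncard_le_ncard hsub).trans hcard) _

theorem orderOf_le_ncard_add (hM : IsPGroup p M) {j : ℕ} {c x : M} (hx : x ∈ zpowers c)
    (hxo : orderOf x = p ^ (j + 1)) : orderOf c ≤ {b | x ∈ zpowers b}.ncard + p ^ j := by
  let x' : zpowers c := ⟨x, hx⟩
  have h := IsCyclic.natCard_le_ncard_add (hM.to_subgroup (zpowers c)) (x := x')
    (by rwa [Subgroup.orderOf_mk])
  rw [Nat.card_zpowers] at h
  refine h.trans (Nat.add_le_add_right ?_ _)
  calc {b : zpowers c | x' ∈ zpowers b}.ncard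
      = (Subtype.val '' {b : zpowers c | x' ∈ zpowers b}).ncard :=
        (Set.ncard_image_of_injective _ Subtype.val_injective).symm
    _ ≤ _ := Set.ncard_le_ncard ?_
  rintro _ ⟨b, hb, rfl⟩
  simpa [MonoidHom.map_zpowers] using
    mem_map_of_mem (zpowers c).subtype (show x' ∈ zpowers b from hb)

end Counting

theorem Nat.lt_of_powerClosedNbhd_bounds {p r P u R v a d b c n m e : ℕ} (hpr : p < r)
    (hu : 1 ≤ u) (huP : u ≤ P) (hv : 1 ≤ v) (hvR : v ≤ R) (hn : n ≤ a * (r * R) + d)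
    (had : d + a = p * P) (hd : P ≤ d) (hb : p * P ≤ b + u) (hc : r * R ≤ c + v) (he : u ≤ e)
    (hm : b * c + e * (r * v) ≤ m) : n < m := by
  have hbc : (p * P - u) * (r * R - v) ≤ b * c := Nat.mul_le_mul (by omega) (by omega)
  have hm' : b * c + u * (r * v) ≤ m := le_trans (by gcongr) hm
  have hR : 1 ≤ r * R := by nlinarith
  zify [show u ≤ p * P by nlinarith, show v ≤ r * R by nlinarith] at hbc
  -- with `b`, `c`, `d` at their extreme values, `m - n` is at least
  -- `u v + (r - p - 1) P v + P (v - 1) + r (P - u) (R - v) ≥ 1`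
  have h₁ : (0 : ℤ) ≤ (d - P) * (r * R - 1) := mul_nonneg (by omega) (by omega)
  have h₂ : (0 : ℤ) ≤ r * ((P - u) * (R - v)) :=
    mul_nonneg (by positivity) (mul_nonneg (by omega) (by omega))
  have h₃ : (0 : ℤ) ≤ (r - p - 1) * P * v :=
    mul_nonneg (mul_nonneg (by omega) (by positivity)) (by positivity)
  have h₄ : (0 : ℤ) ≤ P * (v - 1) := mul_nonneg (by positivity) (by omega)
  have h₅ : (1 : ℤ) ≤ u * v := by exact_mod_cast Nat.one_le_iff_ne_zero.2 (by positivity)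
  zify at hn had hm'
  nlinarith

section Product

variable {H K : Type*} [Group H] [Group K]

theorem Prod.fst_mem_zpowers_fst {u c : H × K} (h : u ∈ zpowers c) : u.1 ∈ zpowers c.1 := by
  simpa [MonoidHom.map_zpowers] using mem_map_of_mem (MonoidHom.fst H K) h

theorem Prod.snd_mem_zpowers_snd {u c : H × K} (h : u ∈ zpowers c) : u.2 ∈ zpowers c.2 := by
  simpa [MonoidHom.map_zpowers] using mem_map_of_mem (MonoidHom.snd H K) h

theorem Nat.Coprime.coprime_orderOf (h : (Nat.card H).Coprime (Nat.card K)) (a : H) (b : K) :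
    (orderOf a).Coprime (orderOf b) :=
  (h.coprime_dvd_left (orderOf_dvd_natCard a)).coprime_dvd_right (orderOf_dvd_natCard b)

variable [Finite H] [Finite K]

theorem Prod.mk_mem_zpowers_mk_iff {c u : H} {d v : K} (h : (orderOf c).Coprime (orderOf d)) :
    (u, v) ∈ zpowers (c, d) ↔ u ∈ zpowers c ∧ v ∈ zpowers d := by
  refine ⟨fun huv => ⟨fst_mem_zpowers_fst huv, snd_mem_zpowers_snd huv⟩, fun ⟨hu, hv⟩ => ?_⟩
  rw [← mem_powers_iff_mem_zpowers, Submonoid.mem_powers_iff] at hu hv ⊢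
  obtain ⟨m, rfl⟩ := hu
  obtain ⟨n, rfl⟩ := hv
  obtain ⟨k, hkm, hkn⟩ := Nat.chineseRemainder h m n
  exact ⟨k, Prod.ext (pow_eq_pow_iff_modEq.2 hkm) (pow_eq_pow_iff_modEq.2 hkn)⟩

theorem Prod.mem_zpowers_of_maximal (hcop : (Nat.card H).Coprime (Nat.card K))
    {c a : H} {d b : K} (hmax : ∀ w, (c, d) ∈ zpowers w → w ∈ zpowers (c, d))
    (ha : c ∈ zpowers a) (hb : d ∈ zpowers b) : a ∈ zpowers c ∧ b ∈ zpowers d :=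
  (mk_mem_zpowers_mk_iff (hcop.coprime_orderOf c d)).1
    (hmax _ ((mk_mem_zpowers_mk_iff (hcop.coprime_orderOf a b)).2 ⟨ha, hb⟩))

theorem ncard_powerClosedNbhd_mk_one_le (c : H) :
    (powerClosedNbhd (c, (1 : K))).ncard ≤
      {a | c ∈ zpowers a}.ncard * Nat.card K +
        ((zpowers c : Set H) \ {a | c ∈ zpowers a}).ncard := by
  have hsub : powerClosedNbhd (c, (1 : K)) ⊆ {a | c ∈ zpowers a} ×ˢ Set.univ ∪
      ((zpowers c : Set H) \ {a | c ∈ zpowers a}) ×ˢ {1} := by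
    rintro ⟨a, b⟩ (h | h)
    · have hb : b = 1 := by simpa using Prod.snd_mem_zpowers_snd h
      by_cases ha : c ∈ zpowers a
      · exact Or.inl ⟨ha, trivial⟩
      · exact Or.inr ⟨⟨Prod.fst_mem_zpowers_fst h, ha⟩, hb⟩
    · exact Or.inl ⟨Prod.fst_mem_zpowers_fst h, trivial⟩
  calc _ ≤ _ := Set.ncard_le_ncard hsub
    _ ≤ _ := Set.ncard_union_le _ _
    _ = _ := by rw [Set.ncard_prod, Set.ncard_prod, Set.ncard_univ, Set.ncard_singleton, mul_one]

theorem le_ncard_powerClosedNbhd_mk (hcop : (Nat.card H).Coprime (Nat.card K)) (c : H) (d : K) :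
    {a | c ∈ zpowers a}.ncard * {b | d ∈ zpowers b}.ncard +
        ((zpowers c : Set H) \ {a | c ∈ zpowers a}).ncard * orderOf d ≤
      (powerClosedNbhd (c, d)).ncard := by
  have hdisj : Disjoint ({a | c ∈ zpowers a} ×ˢ {b | d ∈ zpowers b})
      (((zpowers c : Set H) \ {a | c ∈ zpowers a}) ×ˢ (zpowers d : Set K)) :=
    Set.disjoint_prod.2 (Or.inl Set.disjoint_sdiff_right)
  have hsub : {a | c ∈ zpowers a} ×ˢ {b | d ∈ zpowers b} ∪
      ((zpowers c : Set H) \ {a | c ∈ zpowers a}) ×ˢ (zpowers d : Set K) ⊆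
        powerClosedNbhd (c, d) := by
    rintro ⟨a, b⟩ (⟨ha, hb⟩ | ⟨⟨ha, -⟩, hb⟩)
    · exact Or.inr ((Prod.mk_mem_zpowers_mk_iff (hcop.coprime_orderOf a b)).2 ⟨ha, hb⟩)
    · exact Or.inl ((Prod.mk_mem_zpowers_mk_iff (hcop.coprime_orderOf c d)).2 ⟨ha, hb⟩)
  rw [← ncard_coe_zpowers d, ← Set.ncard_prod, ← Set.ncard_prod, ← Set.ncard_union_eq hdisj]
  exact Set.ncard_le_ncard hsub

variable {p r : ℕ} [Fact p.Prime] [Fact r.Prime]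

theorem Prod.dvd_orderOf_of_maximal [Nontrivial H] [Nontrivial K] (hH : IsPGroup p H)
    (hK : IsPGroup r K) (hpr : p ≠ r) {w : H × K}
    (hmax : ∀ u, w ∈ zpowers u → u ∈ zpowers w) : p ∣ orderOf w ∧ r ∣ orderOf w := by
  obtain ⟨c, d⟩ := w
  have hcop := hH.coprime_natCard_of_ne hK hpr
  obtain ⟨a, ha⟩ := exists_ne (1 : H)
  obtain ⟨b, hb⟩ := exists_ne (1 : K)
  have hc : c ≠ 1 := by
    rintro rfl
    have := (mem_zpowers_of_maximal hcop hmax (one_mem (zpowers a)) (mem_zpowers d)).1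
    exact ha (by simpa using this)
  have hd : d ≠ 1 := by
    rintro rfl
    have := (mem_zpowers_of_maximal hcop hmax (mem_zpowers c) (one_mem (zpowers b))).2
    exact hb (by simpa using this)
  rw [Prod.orderOf_mk]
  exact ⟨(hH.dvd_orderOf hc).trans (Nat.dvd_lcm_left _ _),
    (hK.dvd_orderOf hd).trans (Nat.dvd_lcm_right _ _)⟩

theorem ncard_powerClosedNbhd_mk_one_lt (hpr : p < r) (hH : IsPGroup p H) [IsCyclic K] {β : ℕ}
    (hK : Nat.card K = r ^ β) {c x₁ : H} {x₂ : K} (hmax : ∀ a, c ∈ zpowers a → a ∈ zpowers c)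
    (hx₁ : x₁ ∈ zpowers c) (hx₁1 : x₁ ≠ 1) (hx₂1 : x₂ ≠ 1) :
    (powerClosedNbhd (c, (1 : K))).ncard < (powerClosedNbhd (x₁, x₂)).ncard := by
  have hp : p.Prime := Fact.out
  have hr : r.Prime := Fact.out
  have hK' : IsPGroup r K := .of_card hK
  have hc1 : c ≠ 1 := fun hc => hx₁1 (by simpa [hc] using hx₁)
  obtain ⟨i, hi⟩ := hH.exists_orderOf_eq_pow_succ hc1
  obtain ⟨i', hi'⟩ := hH.exists_orderOf_eq_pow_succ hx₁1
  obtain ⟨j, hj⟩ := hK'.exists_orderOf_eq_pow_succ hx₂1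
  have hi'i : i' ≤ i := by
    have := orderOf_dvd_of_mem_zpowers hx₁
    rwa [hi, hi', Nat.pow_dvd_pow_iff_le_right hp.one_lt, add_le_add_iff_right] at this
  obtain ⟨t, rfl⟩ : ∃ t, β = j + 1 + t := by
    have := orderOf_dvd_natCard x₂
    rw [hj, hK, Nat.pow_dvd_pow_iff_le_right hr.one_lt] at this
    exact Nat.exists_eq_add_of_le this
  have hsplit := Set.ncard_sdiff_add_ncard_of_subset (show {a | c ∈ zpowers a} ⊆ _ from hmax)
  have hupper := ncard_powerClosedNbhd_mk_one_le (K := K) c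
  have hlower := le_ncard_powerClosedNbhd_mk (hH.coprime_natCard_of_ne hK' hpr.ne) x₁ x₂
  have hB := orderOf_le_ncard_add hH hx₁ hi'
  have hC := IsCyclic.natCard_le_ncard_add hK' hj
  have hR : r ^ (j + 1 + t) = r * r ^ (j + t) := by ring
  rw [ncard_coe_zpowers, hi, pow_succ'] at hsplit
  rw [hK, hR] at hupper hC
  rw [hi, pow_succ'] at hB
  rw [hj, pow_succ'] at hlower
  exact Nat.lt_of_powerClosedNbhd_bounds hpr (Nat.one_le_pow _ _ hp.pos)
    (Nat.pow_le_pow_right hp.pos hi'i) (Nat.one_le_pow _ _ hr.pos)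
    (Nat.pow_le_pow_right hr.pos (by omega)) hupper hsplit (pow_le_ncard_zpowers_diff hp hi)
    hB hC (pow_le_ncard_zpowers_diff hp hi') hlower

theorem ncard_powerClosedNbhd_fst_lt (hpr : p < r) (hH : IsPGroup p H) [IsCyclic K] {β : ℕ}
    (hK : Nat.card K = r ^ β) {w v : H × K} (hmax : ∀ u, w ∈ zpowers u → u ∈ zpowers w)
    (hv : v ∈ zpowers w) (hpv : p ∣ orderOf v) (hrv : r ∣ orderOf v) :
    (powerClosedNbhd (w.1, (1 : K))).ncard < (powerClosedNbhd v).ncard := by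
  obtain ⟨c, d⟩ := w
  obtain ⟨x₁, x₂⟩ := v
  have hK' : IsPGroup r K := .of_card hK
  have hcop := hH.coprime_natCard_of_ne hK' hpr.ne
  refine ncard_powerClosedNbhd_mk_one_lt hpr hH hK
    (fun a ha => (Prod.mem_zpowers_of_maximal hcop hmax ha (mem_zpowers d)).1)
    (Prod.fst_mem_zpowers_fst hv) ?_ ?_
  · rintro rfl
    rw [Prod.orderOf_mk, orderOf_one, Nat.lcm_one_left] at hpv
    exact hK'.not_dvd_natCard_of_ne hpr.ne (hpv.trans (orderOf_dvd_natCard x₂))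
  · rintro rfl
    rw [Prod.orderOf_mk, orderOf_one, Nat.lcm_one_right] at hrv
    exact hH.not_dvd_natCard_of_ne hpr.ne' (hrv.trans (orderOf_dvd_natCard x₁))

end Product

section Decomposition

variable {G : Type*} [Group G] [Finite G]

theorem exists_mulEquiv_prod_of_normal {P Q : Subgroup G} (hP : P.Normal) (hQ : Q.Normal)
    (hcop : (Nat.card P).Coprime (Nat.card Q)) (hcard : Nat.card P * Nat.card Q = Nat.card G) :
    ∃ e : P × Q ≃* G, ∀ a b, e (a, b) = a * b := by
  have hdisj := disjoint_of_coprime_natCard hcop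
  let f := MonoidHom.noncommCoprod P.subtype Q.subtype fun a b =>
    commute_of_normal_of_disjoint P Q hP hQ hdisj _ _ a.2 b.2
  have hf : Function.Bijective f := by
    rw [Nat.bijective_iff_injective_and_card, Nat.card_prod]
    refine ⟨(MonoidHom.noncommCoprod_injective _ _ _).2
      ⟨P.subtype_injective, Q.subtype_injective, ?_⟩, hcard⟩
    simpa [range_subtype] using hdisj
  exact ⟨MulEquiv.ofBijective f hf, fun _ _ => rfl⟩

variable [Group.IsNilpotent G] {p q : ℕ} [Fact p.Prime] [Fact q.Prime]

theorem IsPGroup.normal_of_card_mul {P : Subgroup G} (hP : IsPGroup p P) {n : ℕ}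
    (hcard : Nat.card P * n = Nat.card G) (hn : ¬ p ∣ n) : P.Normal := by
  have hindex : P.index = n :=
    Nat.eq_of_mul_eq_mul_left Nat.card_pos (P.card_mul_index.trans hcard.symm)
  have := Sylow.normal_of_normalizerCondition Group.normalizerCondition_of_isNilpotent
    (hP.toSylow (hindex ▸ hn))
  rwa [IsPGroup.toSylow_coe] at this

theorem exists_mulEquiv_prod_of_isNilpotent (hpq : p ≠ q) {P Q : Subgroup G}
    (hP : IsPGroup p P) (hQ : IsPGroup q Q) (hcard : Nat.card P * Nat.card Q = Nat.card G) :
    ∃ e : P × Q ≃* G, ∀ a b, e (a, b) = a * b :=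
  exists_mulEquiv_prod_of_normal (hP.normal_of_card_mul hcard (hQ.not_dvd_natCard_of_ne hpq))
    (hQ.normal_of_card_mul ((mul_comm _ _).trans hcard) (hP.not_dvd_natCard_of_ne hpq.symm))
    (hP.coprime_natCard_of_ne hQ hpq) hcard

end Decomposition

theorem degree_gt_degree_first_component_general
    {G : Type*} [Group G] [Fintype G] (hnil : Group.IsNilpotent G)
    (p₁ p₂ α₁ α₂ : ℕ) (hp₁ : p₁.Prime) (hp₂ : p₂.Prime) (hlt : p₁ < p₂)
    (hα₁ : 1 ≤ α₁) (hα₂ : 1 ≤ α₂)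
    (P₁ P₂ : Subgroup G)
    (hcard : Fintype.card G = p₁ ^ α₁ * p₂ ^ α₂)
    (hP₁ : Nat.card ↥P₁ = p₁ ^ α₁) (hP₂ : Nat.card ↥P₂ = p₂ ^ α₂)
    (hP₂c : IsCyclic ↥P₂)
    (y y₁ y₂ : G) (hy₁ : y₁ ∈ P₁) (hy₂ : y₂ ∈ P₂) (hy : y = y₁ * y₂)
    (hmax : IsMaximalCyclic (Subgroup.zpowers y)) :
    (∀ x ∈ Subgroup.zpowers y, p₁ ∣ orderOf x → p₂ ∣ orderOf x →
        (powerGraph G).degree y₁ < (powerGraph G).degree x) ∧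
      (powerGraph G).degree y₁ < (powerGraph G).degree y := by
  classical
  have := Fact.mk hp₁
  have := Fact.mk hp₂
  have hpg₁ : IsPGroup p₁ P₁ := .of_card hP₁
  have hpg₂ : IsPGroup p₂ P₂ := .of_card hP₂
  obtain ⟨e, he⟩ := exists_mulEquiv_prod_of_isNilpotent hlt.ne hpg₁ hpg₂
    (by rw [hP₁, hP₂, Nat.card_eq_fintype_card, hcard])
  set w : P₁ × P₂ := (⟨y₁, hy₁⟩, ⟨y₂, hy₂⟩)
  have hew : e w = y := (he _ _).trans hy.symm
  have hmaxw (u : P₁ × P₂) (hu : w ∈ zpowers u) : u ∈ zpowers w := by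
    rw [← e.apply_mem_zpowers_apply_iff, hew] at hu ⊢
    exact hmax.mem_zpowers_of_mem_zpowers hu
  have hdeg (v : P₁ × P₂) : (powerGraph G).degree (e v) + 1 = (powerClosedNbhd v).ncard := by
    rw [powerGraph_degree_mulEquiv, powerGraph_degree_add_one]
  have hdeg₁ : (powerGraph G).degree y₁ + 1 = (powerClosedNbhd (w.1, (1 : P₂))).ncard := by
    rw [← hdeg, he, OneMemClass.coe_one, mul_one]
  have main (x : G) (hx : x ∈ zpowers y) (hx₁ : p₁ ∣ orderOf x) (hx₂ : p₂ ∣ orderOf x) :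
      (powerGraph G).degree y₁ < (powerGraph G).degree x := by
    obtain ⟨v, rfl⟩ := e.surjective x
    rw [← hew, e.apply_mem_zpowers_apply_iff] at hx
    rw [e.orderOf_eq] at hx₁ hx₂
    have hv := ncard_powerClosedNbhd_fst_lt hlt hpg₁ hP₂ hmaxw hx hx₁ hx₂
    have := hdeg v
    omega
  have : Nontrivial P₁ := hpg₁.nontrivial_iff_card.2 ⟨α₁, hα₁, hP₁⟩
  have : Nontrivial P₂ := hpg₂.nontrivial_iff_card.2 ⟨α₂, hα₂, hP₂⟩
  obtain ⟨hw₁, hw₂⟩ := Prod.dvd_orderOf_of_maximal hpg₁ hpg₂ hlt.ne hmaxw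
  rw [← e.orderOf_eq, hew] at hw₁ hw₂
  exact ⟨main, main y (mem_zpowers y) hw₁ hw₂⟩

/-- If `⟨y⟩` is a maximal cyclic subgroup of `G` with Sylow decomposition `y = y₁ y₂`,
where `P₁` is noncyclic and `P₂` is cyclic, then every `x ∈ ⟨y⟩` with both Sylow
components nonidentity satisfies `deg(x) > deg(y₁)`; in particular `deg(y) > deg(y₁)`. -/
theorem degree_gt_degree_first_component
    {G : Type*} [Group G] [Fintype G] (hnil : Group.IsNilpotent G)
    (p₁ p₂ α₁ α₂ : ℕ) (hp₁ : p₁.Prime) (hp₂ : p₂.Prime) (hlt : p₁ < p₂)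
    (hα₁ : 1 ≤ α₁) (hα₂ : 1 ≤ α₂)
    (P₁ P₂ : Subgroup G)
    (hcard : Fintype.card G = p₁ ^ α₁ * p₂ ^ α₂)
    (hP₁ : Nat.card ↥P₁ = p₁ ^ α₁) (hP₂ : Nat.card ↥P₂ = p₂ ^ α₂)
    (hP₁nc : ¬ IsCyclic ↥P₁) (hP₂c : IsCyclic ↥P₂)
    (y y₁ y₂ : G) (hy₁ : y₁ ∈ P₁) (hy₂ : y₂ ∈ P₂) (hy : y = y₁ * y₂)
    (hmax : IsMaximalCyclic (Subgroup.zpowers y)) :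
    (∀ x ∈ Subgroup.zpowers y, p₁ ∣ orderOf x → p₂ ∣ orderOf x →
        (powerGraph G).degree y₁ < (powerGraph G).degree x) ∧
      (powerGraph G).degree y₁ < (powerGraph G).degree y :=
  degree_gt_degree_first_component_general hnil p₁ p₂ α₁ α₂ hp₁ hp₂ hlt hα₁ hα₂ P₁ P₂ hcard hP₁ hP₂
    hP₂c y y₁ y₂ hy₁ hy₂ hy hmax
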